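/- The positivity-preserving limiter yields a nonnegative function: if the cell average f̄ > 0 and m' = min_A f, then f̃(x) = θ(f(x) - f̄) + f̄ with θ = min{|f̄/(m' - f̄)|, 1} satisfies f̃(x) ≥ 0 for all x in the cell. -/

import Mathlib

open MeasureTheory

/- Scaling the deviation from the mean by `θ ≥ 0` moves the minimum `m'` to
`fbar - θ (fbar - m')`, and `θ ≤ fbar / (fbar - m')` keeps this nonnegative. -/

theorem add_mul_sub_nonneg_of_mul_sub_le {θ c m y : ℝ} (hθ : 0 ≤ θ)
    (hθc : θ * (c - m) ≤ c) (hy : m ≤ y) : 0 ≤ θ * (y - c) + c := by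
  linarith [mul_le_mul_of_nonneg_left hy hθ]

theorem min_div_sub_one_mul_sub_le {c m : ℝ} (hmc : m < c) :
    min (c / (c - m)) 1 * (c - m) ≤ c :=
  calc min (c / (c - m)) 1 * (c - m) ≤ c / (c - m) * (c - m) :=
        mul_le_mul_of_nonneg_right (min_le_left _ _) (by linarith)
    _ = c := div_mul_cancel₀ _ (by linarith)

theorem min_div_sub_one_nonneg {c m : ℝ} (hc : 0 < c) (hmc : m < c) :
    0 ≤ min (c / (c - m)) 1 :=
  le_min (div_nonneg hc.le (by linarith)) zero_le_one

theorem stmt_7_general (A : Set ℝ)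
    (f : ℝ → ℝ)
    (fbar m' θ : ℝ)
    (hfbarpos : 0 < fbar)
    (hm : IsLeast (f '' A) m') (hmlt : m' < fbar)
    (hθ : θ = min (fbar / (fbar - m')) 1) :
    ∀ x ∈ A, 0 ≤ θ * (f x - fbar) + fbar := by
  intro x hx
  subst hθ
  exact add_mul_sub_nonneg_of_mul_sub_le (min_div_sub_one_nonneg hfbarpos hmlt)
    (min_div_sub_one_mul_sub_le hmlt) (hm.2 ⟨x, hx, rfl⟩)

/-- The positivity-preserving limiter yields a nonnegative function: if the cell average
`f̄ > 0` and `m' = min_A f < f̄`, then `f̃(x) = θ (f(x) - f̄) + f̄` with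
`θ = min (f̄/(f̄ - m')) 1` satisfies `f̃ ≥ 0` on the cell. -/
theorem stmt_7 (A : Set ℝ) (hA : MeasurableSet A) (hAc : IsCompact A) (hAne : A.Nonempty)
    (f : ℝ → ℝ) (hf : ContinuousOn f A)
    (fbar m' θ : ℝ)
    (hfbar : fbar = (volume A).toReal⁻¹ * ∫ x in A, f x)
    (hfbarpos : 0 < fbar)
    (hm : IsLeast (f '' A) m') (hmlt : m' < fbar)
    (hθ : θ = min (fbar / (fbar - m')) 1) :
    ∀ x ∈ A, 0 ≤ θ * (f x - fbar) + fbar :=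
  stmt_7_general A f fbar m' θ hfbarpos hm hmlt hθ
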